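/- arXiv:2303.10492 — 2 statements merged into one kernel-verified Lean document; each statement's English description precedes it below -/
import Mathlib

section
/- Let A be a ring, M a free A-module of rank m with basis e_1,…,e_m, and let P = (I_0, I_1,…,I_r) be a partition of {1,…,m} into disjoint subsets (with I_1,…,I_r nonempty). Then the elements (∑_{i∈I_1} e_i) ∧ ⋯ ∧ (∑_{i∈I_r} e_i), as P ranges over all such partitions into r nonempty blocks together with a complementary block I_0, form a basis of the free A-module ⋀^r M. -/
/-!
Send an ordered partition `P` to its leaders, the first elements `s₁ < ⋯ < s_r` of the blocks
`I_1, …, I_r`; this is a bijection onto the strictly increasing `r`-tuples, which index the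
standard basis `e_{s₁} ∧ ⋯ ∧ e_{s_r}` of `⋀^r M`. Expanding by multilinearity,
`(∑_{I_1} e_i) ∧ ⋯ ∧ (∑_{I_r} e_i)` is the sum of the `e_{c₁} ∧ ⋯ ∧ e_{c_r}` with `c_j ∈ I_j`,
all of which are standard basis vectors `e_c` with `c ≥` the leaders of `P` coordinatewise,
and `e_{leaders P}` occurs with coefficient `1`. So the change of basis matrix is unitriangular
for the coordinatewise order, hence has determinant `1`.
-/

open Finset

theorem Matrix.det_eq_one_of_lowerUnitriangular {κ R : Type*} [Fintype κ] [DecidableEq κ]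
    [PartialOrder κ] [CommRing R] (A : Matrix κ κ R) (hdiag : ∀ i, A i i = 1)
    (htri : ∀ i j, A i j ≠ 0 → j ≤ i) : A.det = 1 := by
  let _ : Fintype (LinearExtension κ) := ‹Fintype κ›
  let e : κ ≃ LinearExtension κ := Equiv.refl κ
  have hA : (A.reindex e e).IsLowerTriangular := fun i j hij => by
    by_contra h
    have hji : toLinearExtension (e.symm j) ≤ toLinearExtension (e.symm i) :=
      toLinearExtension.monotone (htri _ _ h)
    exact (show i < j from hij).not_ge hji
  rw [← Matrix.det_reindex_self e, Matrix.det_of_isLowerTriangular _ hA]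
  exact prod_eq_one fun i _ => hdiag i

theorem Module.Basis.exists_basis_of_repr_unitriangular {ι κ R N : Type*} [Fintype κ]
    [DecidableEq κ] [PartialOrder κ] [CommRing R] [AddCommGroup N] [Module R N]
    (B : Module.Basis κ R N) (v : ι → N) (φ : ι ≃ κ) (hdiag : ∀ i, B.repr (v i) (φ i) = 1)
    (htri : ∀ i k, B.repr (v i) k ≠ 0 → φ i ≤ k) :
    ∃ b : Module.Basis ι R N, ⇑b = v := by
  have hdet : B.det (v ∘ φ.symm) = 1 := by
    rw [B.det_apply]
    refine Matrix.det_eq_one_of_lowerUnitriangular _ (fun k => ?_) (fun k l h => ?_)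
    · simpa [Module.Basis.toMatrix_apply] using hdiag (φ.symm k)
    · simpa [Module.Basis.toMatrix_apply] using htri (φ.symm l) k h
  obtain ⟨hli, hspan⟩ := B.is_basis_iff_det.mpr (hdet ▸ isUnit_one)
  refine ⟨(Module.Basis.mk hli hspan.ge).reindex φ.symm, funext fun i => ?_⟩
  simp

def strictMonoEquivOrderEmbedding (α β : Type*) [LinearOrder α] [Preorder β] :
    {f : α → β // StrictMono f} ≃ (α ↪o β) where
  toFun f := OrderEmbedding.ofStrictMono f.1 f.2
  invFun f := ⟨f, f.strictMono⟩
  left_inv _ := rfl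
  right_inv _ := rfl

section ExteriorPowerBasis

variable {A M I : Type*} [CommRing A] [AddCommGroup M] [Module A M] [LinearOrder I]

noncomputable def Module.Basis.exteriorPowerOfStrictMono (e : Module.Basis I A M) (r : ℕ) :
    Module.Basis {s : Fin r → I // StrictMono s} A (⋀[A]^r M) :=
  (e.exteriorPower r).reindex
    (Set.powersetCard.ofFinEmbEquiv.symm.trans (strictMonoEquivOrderEmbedding _ _).symm)

theorem Module.Basis.exteriorPowerOfStrictMono_apply (e : Module.Basis I A M) {r : ℕ}
    (s : {s : Fin r → I // StrictMono s}) :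
    e.exteriorPowerOfStrictMono r s = exteriorPower.ιMulti A r fun j => e (s.1 j) := by
  rw [exteriorPowerOfStrictMono, reindex_apply, exteriorPower.basis_apply,
    exteriorPower.ιMulti_family, Equiv.symm_trans_apply, Equiv.symm_symm, Equiv.symm_apply_apply]
  rfl

end ExteriorPowerBasis

theorem StrictMono.of_monotone_comp {α β γ : Type*} [Preorder α] [LinearOrder β] [Preorder γ]
    {f : α → β} {g : β → γ} (hg : Monotone g) (hgf : StrictMono (g ∘ f)) : StrictMono f :=
  fun _ _ hab => lt_of_not_ge fun h => (hgf hab).not_ge (hg h)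

section CountLE

variable {α : Type*} [Preorder α] [DecidableLE α] {r : ℕ}

def countLE (s : Fin r → α) : α →o Fin (r + 1) where
  toFun a := ⟨#{k | s k ≤ a}, Nat.lt_succ_of_le (card_le_univ _ |>.trans_eq (Fintype.card_fin r))⟩
  monotone' a _ hab := Fin.mk_le_mk.2 <| card_le_card <|
    monotone_filter_right _ fun k _ (hk : s k ≤ a) => hk.trans hab

theorem val_countLE (s : Fin r → α) (a : α) : (countLE s a : ℕ) = #{k | s k ≤ a} :=
  rfl

theorem succ_le_countLE_iff {s : Fin r → α} (hs : Monotone s) (j : Fin r) (a : α) :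
    j.succ ≤ countLE s a ↔ s j ≤ a := by
  rw [Fin.le_iff_val_le_val, Fin.val_succ, val_countLE, Nat.add_one_le_iff]
  constructor
  · intro hcard
    by_contra hja
    have hsub : ({k | s k ≤ a} : Finset (Fin r)) ⊆ Iio j := fun k hk =>
      mem_Iio.2 (lt_of_not_ge fun hjk => hja ((hs hjk).trans (mem_filter.1 hk).2))
    have := card_le_card hsub
    rw [Fin.card_Iio] at this
    omega
  · intro hja
    have hsub : Iic j ⊆ ({k | s k ≤ a} : Finset (Fin r)) := fun k hk =>
      mem_filter.2 ⟨mem_univ k, (hs (mem_Iic.1 hk)).trans hja⟩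
    have := card_le_card hsub
    rw [Fin.card_Iic] at this
    omega

end CountLE

variable {m r : ℕ}

def block (P : Fin m →o Fin (r + 1)) (j : Fin r) : Finset (Fin m) := {i | P i = j.succ}

theorem strictMono_of_apply_eq_succ (P : Fin m →o Fin (r + 1)) {c : Fin r → Fin m}
    (hc : ∀ j, P (c j) = j.succ) : StrictMono c :=
  StrictMono.of_monotone_comp P.monotone fun j k hjk => by simpa [hc] using Fin.strictMono_succ hjk

abbrev OrderedPartition (m r : ℕ) : Type :=
  {P : Fin m →o Fin (r + 1) // ∀ j : Fin (r + 1), j ≠ 0 → ∃ i, P i = j}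

namespace OrderedPartition

variable (P : OrderedPartition m r)

theorem block_nonempty (j : Fin r) : (block P.1 j).Nonempty := by
  obtain ⟨i, hi⟩ := P.2 j.succ j.succ_ne_zero
  exact ⟨i, by simp [block, hi]⟩

noncomputable def leaders (j : Fin r) : Fin m := (block P.1 j).min' (P.block_nonempty j)

theorem apply_leaders (j : Fin r) : P.1 (P.leaders j) = j.succ :=
  (mem_filter.1 (min'_mem _ (P.block_nonempty j))).2

theorem leaders_le {i : Fin m} {j : Fin r} (hi : P.1 i = j.succ) : P.leaders j ≤ i :=
  min'_le _ _ (by simp [block, hi])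

theorem leaders_strictMono : StrictMono P.leaders :=
  strictMono_of_apply_eq_succ P.1 P.apply_leaders

theorem succ_le_apply_iff (i : Fin m) (j : Fin r) : j.succ ≤ P.1 i ↔ P.leaders j ≤ i := by
  refine ⟨fun hji => le_of_not_gt fun hi => ?_, fun hi => P.apply_leaders j ▸ P.1.monotone hi⟩
  have hPi : P.1 i = j.succ := le_antisymm (P.apply_leaders j ▸ P.1.monotone hi.le) hji
  exact hi.not_ge (P.leaders_le hPi)

theorem leaders_injective :
    Function.Injective (leaders : OrderedPartition m r → Fin r → Fin m) := by
  intro P Q h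
  refine Subtype.ext (OrderHom.ext _ _ (funext fun i => eq_of_forall_le_iff fun k => ?_))
  cases k using Fin.cases with
  | zero => simp
  | succ j => rw [P.succ_le_apply_iff, Q.succ_le_apply_iff, h]

def ofStrictMono {s : Fin r → Fin m} (hs : StrictMono s) : OrderedPartition m r := by
  refine ⟨countLE s, fun k hk => ?_⟩
  obtain ⟨j, rfl⟩ := Fin.exists_succ_eq.2 hk
  have hIic : ({k | s k ≤ s j} : Finset (Fin r)) = Iic j := by ext; simp [hs.le_iff_le]
  exact ⟨s j, Fin.ext (by rw [val_countLE, hIic, Fin.card_Iic, Fin.val_succ])⟩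

theorem leaders_ofStrictMono {s : Fin r → Fin m} (hs : StrictMono s) :
    (ofStrictMono hs).leaders = s :=
  funext fun j => eq_of_forall_ge_iff fun i =>
    ((ofStrictMono hs).succ_le_apply_iff i j).symm.trans (succ_le_countLE_iff hs.monotone j i)

noncomputable def leadersEquiv : OrderedPartition m r ≃ {s : Fin r → Fin m // StrictMono s} :=
  Equiv.ofBijective (fun P => ⟨P.leaders, P.leaders_strictMono⟩)
    ⟨fun _ _ h => leaders_injective (congrArg Subtype.val h),
      fun s => ⟨ofStrictMono s.2, Subtype.ext (leaders_ofStrictMono s.2)⟩⟩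

@[simp]
theorem val_leadersEquiv : (leadersEquiv P).1 = P.leaders :=
  rfl

end OrderedPartition

theorem repr_ιMulti_sum_block {A M : Type*} [CommRing A] [AddCommGroup M] [Module A M]
    (e : Module.Basis (Fin m) A M) (P : Fin m →o Fin (r + 1))
    (s : {s : Fin r → Fin m // StrictMono s}) :
    (e.exteriorPowerOfStrictMono r).repr
        (exteriorPower.ιMulti A r fun j => ∑ i ∈ block P j, e i) s =
      if ∀ j, P (s.1 j) = j.succ then 1 else 0 := by
  have hexpand := (exteriorPower.ιMulti A r).toMultilinearMap.map_sum_finset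
    (fun _ i => e i) (block P)
  simp only [AlternatingMap.coe_multilinearMap] at hexpand
  have hterm : ∀ c ∈ Fintype.piFinset (block P),
      (e.exteriorPowerOfStrictMono r).repr (exteriorPower.ιMulti A r fun j => e (c j)) s =
        if c = s.1 then 1 else 0 := fun c hc => by
    have hc := e.exteriorPowerOfStrictMono_apply
      ⟨c, strictMono_of_apply_eq_succ P fun j => by simpa [block] using Fintype.mem_piFinset.1 hc j⟩
    dsimp only at hc
    rw [← hc, Module.Basis.repr_self, Finsupp.single_apply]
    simp [Subtype.ext_iff]
  rw [hexpand, map_sum, Finsupp.finsetSum_apply, sum_congr rfl hterm, sum_ite_eq']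
  simp [block]

theorem partition_basis_of_exteriorPower
    {A : Type*} [CommRing A] {M : Type*} [AddCommGroup M] [Module A M]
    (m r : ℕ) (e : Module.Basis (Fin m) A M) :
    ∃ b : Module.Basis {P : Fin m →o Fin (r + 1) // ∀ j : Fin (r + 1), j ≠ 0 → ∃ i, P i = j}
        A (⋀[A]^r M),
      ∀ P, (b P : ExteriorAlgebra A M) =
        ExteriorAlgebra.ιMulti A r
          (fun j : Fin r =>
            ∑ i ∈ Finset.univ.filter (fun i : Fin m => P.1 i = Fin.succ j), e i) := by
  obtain ⟨b, hb⟩ := (e.exteriorPowerOfStrictMono r).exists_basis_of_repr_unitriangular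
    (fun P : OrderedPartition m r => exteriorPower.ιMulti A r fun j => ∑ i ∈ block P.1 j, e i)
    OrderedPartition.leadersEquiv
    (fun P => by simp [repr_ιMulti_sum_block, P.apply_leaders])
    (fun P s h => by
      rw [repr_ιMulti_sum_block, ite_ne_right_iff] at h
      exact fun j => P.leaders_le (h.1 j))
  exact ⟨b, fun P => by rw [hb]; rfl⟩
end

section
/- Let K_M(f_1,…,f_d) denote the Koszul-type complex of an object M with commuting endomorphisms f_i in an abelian category. For the A_inf-module decomposition of A_inf(R_∞^□) into rank-one pieces indexed by weights k, the complex η_μ K_{A_inf}(δ_1−1,…,δ_d−1) on the summand A_inf·X^k (where δ_j acts as multiplication by [ε]^{k_j} on X^k, suitably normalized) is isomorphic to the Koszul complex K_{A_inf}([k_1−k_0]_q,…,[k_r−k_0]_q,[k_{r+1}]_q,…,[k_d]_q), where [n]_q = ([ε]^n − 1)/([ε] − 1). -/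
/-!
Koszul complexes `K_M(f_1,…,f_d)`, presented concretely: the degree-`i` term is the
free module on the `i`-element subsets of `Fin d`, and the differential is the usual
signed sum contracting with the commuting endomorphisms `f_j`.
-/

open scoped BigOperators

/-- The degree-`i` term of the Koszul complex on `d` generators with values in `A`. -/
abbrev KT (A : Type*) (d i : ℕ) : Type _ := {s : Finset (Fin d) // s.card = i} → A

/-- The Koszul differential associated to a family of commuting additive
endomorphisms `f j`. -/
noncomputable def KD {A : Type*} [AddCommGroup A] {d : ℕ} (f : Fin d → (A →+ A)) (i : ℕ) :
    KT A d i →+ KT A d (i + 1) :=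
  AddMonoidHom.mk' (fun x s =>
      ∑ j ∈ s.1.attach,
        ((-1 : ℤ) ^ ((s.1.filter (fun t => t < j.1)).card)) •
          f j.1 (x ⟨s.1.erase j.1, by
            simp [Finset.card_erase_of_mem j.2, s.2]⟩))
    (by
      intro x y
      funext s
      simp [Pi.add_apply, map_add, smul_add, Finset.sum_add_distrib])

/-!
Statement 13 (the décalage computation in Lemma `WnD-decomp`):
Let `A_inf = A_inf(O_C)`, `μ = [ε] − 1`, and for `a ∈ ℤ` let `[a]_q = ([ε]^a − 1)/([ε] − 1)`.
On the rank-one summand `A_inf · X^k` of `A_inf(R_∞^□)`, the group element `δ_j` acts as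
multiplication by `[ε]^{a_j}` (with `a_j = k_j − k_0` for `j ≤ r`, `a_j = k_j` for `j > r`),
so the Koszul complex of `(δ_1 − 1, …, δ_d − 1)` on this summand is
`K_{A_inf}([ε]^{a_1} − 1, …, [ε]^{a_d} − 1)`.  The claim: applying the décalage `η_μ`
yields the Koszul complex `K_{A_inf}([a_1]_q, …, [a_d]_q)`, i.e. there is an isomorphism
of complexes of the latter onto the subcomplex
`(η_μ K)^i = μ^i K^i ∩ d^{-1}(μ^{i+1} K^{i+1})`.

We abstract `A_inf` as an integral domain `A`, the Teichmüller powers of `ε` as a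
homomorphism `E : ℤ → A` (so `μ = E 1 − 1`), and the `q`-integers as elements
`q a` with `μ · (q a) = E a − 1`.
-/
theorem eta_mu_koszul_iso_q_koszul
    {A : Type*} [CommRing A] [IsDomain A] (d : ℕ)
    (E : ℤ → A) (hE0 : E 0 = 1) (hEadd : ∀ a b : ℤ, E (a + b) = E a * E b)
    (μ : A) (hμ : μ = E 1 - 1) (hμne : μ ≠ 0)
    (q : ℤ → A) (hq : ∀ a : ℤ, μ * q a = E a - 1)
    (a : Fin d → ℤ) :
    ∃ e : ∀ i : ℕ, KT A d i →+ KT A d i,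
      (∀ i, Function.Injective (e i)) ∧
      -- `e` intertwines the differentials of `K([a]_q)` and `K([ε]^a − 1)`
      (∀ i (x : KT A d i),
        e (i + 1) (KD (fun j => AddMonoidHom.mulLeft (q (a j))) i x) =
          KD (fun j => AddMonoidHom.mulLeft (E (a j) - 1)) i (e i x)) ∧
      -- the image of `e` in degree `i` is exactly `(η_μ K([ε]^a − 1))^i`
      (∀ i, Set.range (e i) =
        {x : KT A d i | (∀ s, μ ^ i ∣ x s) ∧
          ∀ s, μ ^ (i + 1) ∣ KD (fun j => AddMonoidHom.mulLeft (E (a j) - 1)) i x s}) := by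
  refine ⟨fun i => AddMonoidHom.mk' (fun x s => μ ^ i * x s)
      (by intro x y; funext s; simp [mul_add]), ?_, ?_, ?_⟩
  · intro i x y h
    funext s
    have := congrFun h s
    exact mul_left_cancel₀ (pow_ne_zero i hμne) this
  · intro i x
    funext s
    simp only [AddMonoidHom.mk'_apply, KD, Finset.mul_sum]
    refine Finset.sum_congr rfl fun j _ => ?_
    simp only [AddMonoidHom.coe_mulLeft, mul_smul_comm]
    congr 1
    rw [← hq]
    ring
  · intro i
    ext x
    constructor
    · rintro ⟨y, rfl⟩
      refine ⟨fun s => ⟨y s, rfl⟩, fun s => ?_⟩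
      simp only [AddMonoidHom.mk'_apply, KD]
      refine Finset.dvd_sum fun j _ => ?_
      rw [zsmul_eq_mul]
      refine Dvd.dvd.mul_left ?_ _
      simp only [AddMonoidHom.coe_mulLeft]
      rw [← hq]
      exact ⟨q (a j.1) * y _, by ring⟩
    · rintro ⟨h1, _⟩
      refine ⟨fun s => Classical.choose (h1 s), ?_⟩
      funext s
      exact (Classical.choose_spec (h1 s)).symm
end
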